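/- Let M > 0 and 𝐞 ∈ ℝ with |𝐞| < M, set r₊ = M + √(M² − 𝐞²), and define V_main(r) = r⁻²·(1 − 2M/r + 𝐞²/r²) for r ∈ [r₊, ∞). Then V_main has exactly one critical point in (r₊, ∞), located at r_crit = (3M + √(9M² − 8𝐞²))/2, and this critical point is a nondegenerate maximum (i.e. V_main''(r_crit) < 0). Moreover, there exists a constant c > 0 depending only on M and 𝐞 such that V_main'(r) ≥ c·|r − r_crit| for all r ∈ [r₊, r_crit], and −V_main'(r) ≥ c·r⁻⁴·|r − r_crit| for all r ∈ [r_crit, ∞). -/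

import Mathlib

/-!
Writing `V = r⁻² - 2M r⁻³ + 𝐞² r⁻⁴`, one gets
`V' = -2 (r² - 3Mr + 2𝐞²) / r⁵ = -2 (r - r₋)(r - r_crit) / r⁵`
with `r₋ = (3M - √(9M² - 8𝐞²))/2` and `0 ≤ r₋ < r₊ < r_crit`. Hence on `(r₊, ∞)` the sign of `V'`
is that of `r_crit - r`, and `V''(r_crit) = -2 (r_crit - r₋) / r_crit⁵ < 0`. The quantitative
bounds come from `(r - r₋)/r⁵ ≥ (r₊ - r₋)/r_crit⁵` on `[r₊, r_crit]` and
`(r - r₋)/r ≥ (r_crit - r₋)/r_crit` on `[r_crit, ∞)`.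
-/

open Set Filter Topology

namespace ReissnerNordstrom

theorem hasDerivAt_potential (M E : ℝ) {r : ℝ} (hr : r ≠ 0) :
    HasDerivAt (fun r : ℝ => (r ^ 2)⁻¹ * (1 - 2 * M / r + E ^ 2 / r ^ 2))
      (-2 * (r ^ 2 - 3 * M * r + 2 * E ^ 2) / r ^ 5) r := by
  have hr2 : r ^ 2 ≠ 0 := pow_ne_zero 2 hr
  refine (((hasDerivAt_pow 2 r).fun_inv hr2).fun_mul
    (((hasDerivAt_const r 1).fun_sub
        ((hasDerivAt_const r (2 * M)).fun_div (hasDerivAt_id' r) hr)).fun_add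
      ((hasDerivAt_const r (E ^ 2)).fun_div (hasDerivAt_pow 2 r) hr2))).congr_deriv ?_
  field_simp
  ring

section Horizon

variable {M E : ℝ}

theorem sq_lt_sq_of_abs_lt (hE : |E| < M) : E ^ 2 < M ^ 2 :=
  sq_lt_sq.mpr (hE.trans_le (le_abs_self M))

theorem innerRoot_nonneg (hE : |E| < M) : 0 ≤ (3 * M - √(9 * M ^ 2 - 8 * E ^ 2)) / 2 := by
  have hM := (abs_nonneg E).trans_lt hE
  have : √(9 * M ^ 2 - 8 * E ^ 2) ≤ 3 * M := by
    rw [Real.sqrt_le_iff]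
    constructor <;> nlinarith
  linarith

theorem lt_sqrt_photon_discr (hE : |E| < M) : M < √(9 * M ^ 2 - 8 * E ^ 2) := by
  rw [Real.lt_sqrt ((abs_nonneg E).trans hE.le)]
  nlinarith [sq_lt_sq_of_abs_lt hE]

theorem innerRoot_lt_horizon (hE : |E| < M) :
    (3 * M - √(9 * M ^ 2 - 8 * E ^ 2)) / 2 < M + √(M ^ 2 - E ^ 2) := by
  linarith [lt_sqrt_photon_discr hE, Real.sqrt_nonneg (M ^ 2 - E ^ 2)]

theorem horizon_lt_photonSphere (hE : |E| < M) :
    M + √(M ^ 2 - E ^ 2) < (3 * M + √(9 * M ^ 2 - 8 * E ^ 2)) / 2 := by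
  have hE2 := sq_lt_sq_of_abs_lt hE
  have h : 2 * √(M ^ 2 - E ^ 2) < √(9 * M ^ 2 - 8 * E ^ 2) := by
    rw [Real.lt_sqrt (by positivity), mul_pow, Real.sq_sqrt (by linarith)]
    nlinarith
  linarith [lt_sqrt_photon_discr hE, (abs_nonneg E).trans_lt hE]

theorem photon_quadratic_eq_mul (hE : |E| < M) (r : ℝ) :
    r ^ 2 - 3 * M * r + 2 * E ^ 2 =
      (r - (3 * M - √(9 * M ^ 2 - 8 * E ^ 2)) / 2) *
        (r - (3 * M + √(9 * M ^ 2 - 8 * E ^ 2)) / 2) := by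
  have := Real.sq_sqrt (show 0 ≤ 9 * M ^ 2 - 8 * E ^ 2 by nlinarith [sq_lt_sq_of_abs_lt hE])
  linear_combination (1 / 4 : ℝ) * this

end Horizon

section QuadraticOverQuintic

variable {a b r : ℝ}

theorem quadratic_div_pow_five_eq_zero_iff (ha : a < r) (hr : 0 < r) :
    -2 * ((r - a) * (r - b)) / r ^ 5 = 0 ↔ r = b := by
  have : r - a ≠ 0 := sub_ne_zero.mpr ha.ne'
  simp [hr.ne', this, sub_eq_zero]

theorem hasDerivAt_quadratic_div_pow_five_of_root (hb : b ≠ 0) :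
    HasDerivAt (fun r => -2 * ((r - a) * (r - b)) / r ^ 5) (-2 * (b - a) / b ^ 5) b := by
  refine (((((hasDerivAt_id' b).sub_const a).fun_mul ((hasDerivAt_id' b).sub_const b)).const_mul
    (-2 : ℝ)).fun_div (hasDerivAt_pow 5 b) (pow_ne_zero 5 hb)).congr_deriv ?_
  field_simp
  ring

theorem mul_abs_sub_le_quadratic_div_pow_five {p : ℝ} (hap : a ≤ p) (hp : 0 < p)
    (hr : r ∈ Icc p b) : 2 * (p - a) / b ^ 5 * |r - b| ≤ -2 * ((r - a) * (r - b)) / r ^ 5 := by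
  obtain ⟨hpr, hrb⟩ := hr
  have hr0 : 0 < r := hp.trans_le hpr
  have hcoef : 2 * (p - a) / b ^ 5 ≤ 2 * (r - a) / r ^ 5 := by
    gcongr
    linarith
  rw [abs_of_nonpos (sub_nonpos.mpr hrb)]
  calc 2 * (p - a) / b ^ 5 * -(r - b) ≤ 2 * (r - a) / r ^ 5 * -(r - b) := by
        gcongr
        linarith
    _ = -2 * ((r - a) * (r - b)) / r ^ 5 := by ring

theorem mul_pow_four_inv_abs_sub_le_neg_quadratic_div_pow_five (ha : 0 ≤ a) (hb : 0 < b)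
    (hr : r ∈ Ici b) :
    2 * (b - a) / b * (r ^ 4)⁻¹ * |r - b| ≤ -(-2 * ((r - a) * (r - b)) / r ^ 5) := by
  have hbr : b ≤ r := hr
  have hr0 : 0 < r := hb.trans_le hbr
  have hcoef : 2 * (b - a) / b ≤ 2 * (r - a) / r := by
    rw [div_le_div_iff₀ hb hr0]
    nlinarith
  rw [abs_of_nonneg (sub_nonneg.mpr hbr)]
  calc 2 * (b - a) / b * (r ^ 4)⁻¹ * (r - b) ≤ 2 * (r - a) / r * (r ^ 4)⁻¹ * (r - b) := by
        gcongr
    _ = -(-2 * ((r - a) * (r - b)) / r ^ 5) := by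
        field_simp

end QuadraticOverQuintic

end ReissnerNordstrom

open ReissnerNordstrom

theorem statement0 (M E : ℝ) (hE : |E| < M)
    (rp rcrit : ℝ)
    (hrp : rp = M + Real.sqrt (M ^ 2 - E ^ 2))
    (hrcrit : rcrit = (3 * M + Real.sqrt (9 * M ^ 2 - 8 * E ^ 2)) / 2)
    (Vmain : ℝ → ℝ)
    (hV : ∀ r : ℝ, Vmain r = (r ^ 2)⁻¹ * (1 - 2 * M / r + E ^ 2 / r ^ 2)) :
    rcrit ∈ Set.Ioi rp ∧
    (∀ r ∈ Set.Ioi rp, (deriv Vmain r = 0 ↔ r = rcrit)) ∧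
    deriv (deriv Vmain) rcrit < 0 ∧
    ∃ c : ℝ, 0 < c ∧
      (∀ r ∈ Set.Icc rp rcrit, c * |r - rcrit| ≤ deriv Vmain r) ∧
      (∀ r ∈ Set.Ici rcrit, c * (r ^ 4)⁻¹ * |r - rcrit| ≤ -deriv Vmain r) := by
  set rin := (3 * M - √(9 * M ^ 2 - 8 * E ^ 2)) / 2
  have hin : 0 ≤ rin := innerRoot_nonneg hE
  have hin_rp : rin < rp := hrp ▸ innerRoot_lt_horizon hE
  have hrp_rc : rp < rcrit := hrp ▸ hrcrit ▸ horizon_lt_photonSphere hE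
  have hrp0 : 0 < rp := hin.trans_lt hin_rp
  have hrc0 : 0 < rcrit := hrp0.trans hrp_rc
  have hderiv (r : ℝ) (hr : r ≠ 0) :
      HasDerivAt Vmain (-2 * ((r - rin) * (r - rcrit)) / r ^ 5) r := by
    rw [funext hV, hrcrit, ← photon_quadratic_eq_mul hE]
    exact hasDerivAt_potential M E hr
  refine ⟨hrp_rc, fun r hr => ?_, ?_, ?_⟩
  · have hr0 : 0 < r := hrp0.trans hr
    rw [(hderiv r hr0.ne').deriv]
    exact quadratic_div_pow_five_eq_zero_iff (hin_rp.trans hr) hr0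
  · have hloc : deriv Vmain =ᶠ[𝓝 rcrit] fun r => -2 * ((r - rin) * (r - rcrit)) / r ^ 5 :=
      (eventually_ne_nhds hrc0.ne').mono fun r hr => (hderiv r hr).deriv
    rw [hloc.deriv_eq, (hasDerivAt_quadratic_div_pow_five_of_root hrc0.ne').deriv]
    exact div_neg_of_neg_of_pos (by linarith) (pow_pos hrc0 5)
  · refine ⟨min (2 * (rp - rin) / rcrit ^ 5) (2 * (rcrit - rin) / rcrit),
      lt_min (by apply div_pos <;> linarith [pow_pos hrc0 5]) (by apply div_pos <;> linarith),
      fun r hr => ?_, fun r hr => ?_⟩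
    · rw [(hderiv r (hrp0.trans_le hr.1).ne').deriv]
      exact (mul_le_mul_of_nonneg_right (min_le_left _ _) (abs_nonneg _)).trans
        (mul_abs_sub_le_quadratic_div_pow_five hin_rp.le hrp0 hr)
    · rw [(hderiv r (hrc0.trans_le hr).ne').deriv]
      refine le_trans ?_ (mul_pow_four_inv_abs_sub_le_neg_quadratic_div_pow_five hin hrc0 hr)
      gcongr
      exact min_le_right _ _
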